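/- Define T : ℕ × ℕ → Ordinal by: T(1,m) = 0 and T(2,m) = ω for all m, and for n ≥ 3, T(n,m) is any function satisfying T(n,m) ≤ 2ω + max over 1 ≤ i ≤ n-1 of (T(i, n+m-i) + T(n-i, m+i)). Then for all n ≥ 1 and m ≥ 0, T(n,m) ≤ (2n-3)·ω, where for n = 1 we interpret (2n-3)·ω as 0. -/

import Mathlib

/-!
Strong induction on `n`. Every bound is a finite multiple of `ω`, and on such ordinals addition
is commutative: `ω * a + ω * b = ω * (a + b)`. A split of `n` into `i + (n - i)` therefore costs
at most `ω * ((2i - 3) + (2(n - i) - 3)) ≤ ω * (2n - 5)`, and the extra `ω * 2` gives `ω * (2n - 3)`.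
-/

/-- Truncated subtraction makes this cover the pieces `i = 1` and `n - i = 1`, whose bound is `0`. -/
lemma two_mul_sub_three_add_two_mul_sub_three_le {n i : ℕ} (hi : 1 ≤ i) (hin : i < n) :
    (2 * i - 3) + (2 * (n - i) - 3) ≤ 2 * n - 5 := by
  omega

lemma mul_natCast_add_mul_natCast_le (x : Ordinal) {a b c : ℕ} (h : a + b ≤ c) :
    x * a + x * b ≤ x * c := by
  rw [← mul_add, ← Nat.cast_add]
  exact mul_le_mul_right (by exact_mod_cast h) x

lemma mul_two_add_mul_natCast (x : Ordinal) (k : ℕ) : x * 2 + x * k = x * (2 + k : ℕ) := by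
  rw [← mul_add]
  norm_cast

open Ordinal in
theorem robertson_webb_recurrence_bound (T : ℕ → ℕ → Ordinal)
    (h1 : ∀ m, T 1 m = 0) (h2 : ∀ m, T 2 m = ω)
    (h3 : ∀ n m, 3 ≤ n →
      T n m ≤ ω * 2 + (Finset.Icc 1 (n - 1)).sup (fun i => T i (n + m - i) + T (n - i) (m + i))) :
    ∀ n m, 1 ≤ n → T n m ≤ ω * (2 * n - 3 : ℕ) := by
  intro n
  induction n using Nat.strong_induction_on with
  | _ n ih =>
    intro m hn
    obtain rfl | rfl | hn3 : n = 1 ∨ n = 2 ∨ 3 ≤ n := by omega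
    · simp [h1]
    · simp [h2]
    · have hsup : (Finset.Icc 1 (n - 1)).sup (fun i => T i (n + m - i) + T (n - i) (m + i))
          ≤ ω * (2 * n - 5 : ℕ) := by
        refine Finset.sup_le fun i hi => ?_
        obtain ⟨hi1, hin⟩ := Finset.mem_Icc.mp hi
        calc T i (n + m - i) + T (n - i) (m + i)
            ≤ ω * (2 * i - 3 : ℕ) + ω * (2 * (n - i) - 3 : ℕ) :=
              add_le_add (ih i (by omega) _ hi1) (ih (n - i) (by omega) _ (by omega))
          _ ≤ ω * (2 * n - 5 : ℕ) :=
              mul_natCast_add_mul_natCast_le ω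
                (two_mul_sub_three_add_two_mul_sub_three_le hi1 (by omega))
      calc T n m ≤ ω * 2 + _ := h3 n m hn3
        _ ≤ ω * 2 + ω * (2 * n - 5 : ℕ) := add_le_add_right hsup _
        _ = ω * (2 * n - 3 : ℕ) := by
          rw [mul_two_add_mul_natCast]
          congr 3
          omega
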